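/- Let R be a commutative ring and let ω ∈ R satisfy ω² + ω + 1 = 0 (so that ω³ = 1 and ω is a unit in R). Then in the ring of formal power series R[[q]] one has the identity ∏_{n≥1} (1−q^n)(1−q^{17n})⁵(1−ω²q^{17n})(1−ω⁻²q^{17n})(1−ω⁴q^{17n})(1−ω⁻⁴q^{17n})(1−ω⁸q^{17n})(1−ω⁻⁸q^{17n})(1−ω¹⁰q^{17n})(1−ω⁻¹⁰q^{17n})(1−ω¹⁴q^{17n})(1−ω⁻¹⁴q^{17n})(1−ω¹⁶q^{17n})(1−ω⁻¹⁶q^{17n}) · ((1−ωq^n)(1−ω⁻¹q^n))⁻¹ = ∏_{n≥1} (1−q^n)²(1−q^{51n})⁶ · ((1−q^{3n})(1−q^{17n}))⁻¹. -/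

import Mathlib

/-! Since `ω` is a primitive cube root of unity, `ω⁻¹ = ω²` and every power of `ω` in the
left-hand factors is `ω` or `ω²`; the factors at `17n` pair up as six copies of
`(1 - ωq^{17n})(1 - ω²q^{17n})`. The identity `(1 - ωx)(1 - ω²x)(1 - x) = 1 - x³`, used at
`x = q^n` and `x = q^{17n}`, then makes the `n`-th factors of both sides agree. -/

open PowerSeries LaurentPolynomial Finset

/-- The factor `1 - c·q^m` of an infinite product, as a formal power series. -/
noncomputable def factor {R : Type*} [CommRing R] (c : R) (m : ℕ) : PowerSeries R :=
  1 - PowerSeries.C c * PowerSeries.X ^ m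

/-- The infinite product `∏_{n ≥ 1} f n` in `R[[q]]`, for a sequence of factors in which the
`n`-th factor is congruent to `1` modulo `q^n`: it is defined coefficientwise, the coefficient
of `q^m` being the (stabilized) coefficient of `q^m` in the partial product of the factors with
index `1, …, m+1`, which agrees with the limit of the partial products in the `q`-adic topology. -/
noncomputable def infiniteProd {R : Type*} [CommRing R] (f : ℕ → PowerSeries R) : PowerSeries R :=
  PowerSeries.mk fun m => PowerSeries.coeff m (∏ n ∈ Finset.range (m + 1), f (n + 1))

theorem one_sub_mul_mul_one_sub_sq_mul_mul_one_sub {S : Type*} [CommRing S] {ζ : S}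
    (hζ : ζ ^ 2 + ζ + 1 = 0) (x : S) :
    (1 - ζ * x) * (1 - ζ ^ 2 * x) * (1 - x) = 1 - x ^ 3 := by
  linear_combination (1 - x) * (-x + (ζ - 1) * x ^ 2) * hζ

theorem Ring.mul_inverse_eq_mul_inverse_of_mul_eq {M₀ : Type*} [CommMonoidWithZero M₀]
    {u w P Q : M₀} (hu : IsUnit u) (hw : IsUnit w) (h : P * w = Q * u) :
    P * Ring.inverse u = Q * Ring.inverse w := by
  rw [Ring.eq_mul_inverse_iff_mul_eq _ _ _ hw, mul_right_comm, h,
    Ring.mul_inverse_cancel_right _ _ hu]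

section Factor

variable {R : Type*} [CommRing R]

theorem isUnit_factor (c : R) {m : ℕ} (hm : m ≠ 0) : IsUnit (factor c m) := by
  rw [PowerSeries.isUnit_iff_constantCoeff]
  simp [factor, zero_pow hm]

theorem factor_mul_factor_sq_mul_factor_one {ω : R} (hω : ω ^ 2 + ω + 1 = 0) (m : ℕ) :
    factor ω m * factor (ω ^ 2) m * factor 1 m = factor 1 (3 * m) := by
  have hC : PowerSeries.C ω ^ 2 + PowerSeries.C ω + 1 = 0 := by
    simpa using congrArg PowerSeries.C hω
  simpa [factor, pow_mul'] using one_sub_mul_mul_one_sub_sq_mul_mul_one_sub hC (X ^ m)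

theorem infiniteProd_congr {f g : ℕ → PowerSeries R} (h : ∀ n, n ≠ 0 → f n = g n) :
    infiniteProd f = infiniteProd g := by
  unfold infiniteProd
  congr 2 with m
  exact congrArg _ (Finset.prod_congr rfl fun n _ => h (n + 1) n.succ_ne_zero)

end Factor

theorem crank17_product_identity {R : Type*} [CommRing R] (ω : R)
    (hω : ω ^ 2 + ω + 1 = 0) :
    (infiniteProd fun n =>
      factor 1 n *
      factor 1 (17 * n) ^ 5 *
      factor (ω ^ 2) (17 * n) *
      factor (Ring.inverse ω ^ 2) (17 * n) *
      factor (ω ^ 4) (17 * n) *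
      factor (Ring.inverse ω ^ 4) (17 * n) *
      factor (ω ^ 8) (17 * n) *
      factor (Ring.inverse ω ^ 8) (17 * n) *
      factor (ω ^ 10) (17 * n) *
      factor (Ring.inverse ω ^ 10) (17 * n) *
      factor (ω ^ 14) (17 * n) *
      factor (Ring.inverse ω ^ 14) (17 * n) *
      factor (ω ^ 16) (17 * n) *
      factor (Ring.inverse ω ^ 16) (17 * n) *
      Ring.inverse (factor (ω) n * factor (Ring.inverse ω) n)) =
    infiniteProd fun n =>
      factor (1 : R) n ^ 2 * factor (1 : R) (51 * n) ^ 6 *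
      Ring.inverse (factor (1 : R) (3 * n) * factor (1 : R) (17 * n)) := by
  have hmul : ω * ω ^ 2 = 1 := by linear_combination (ω - 1) * hω
  have hcube : ω ^ 3 = 1 := by linear_combination (ω - 1) * hω
  have hinv : Ring.inverse ω = ω ^ 2 := Ring.inverse_unit (Units.mkOfMulEqOne ω _ hmul)
  refine infiniteProd_congr fun n hn => ?_
  simp only [hinv, ← pow_mul, pow_eq_pow_mod 4 hcube, pow_eq_pow_mod 8 hcube,
    pow_eq_pow_mod 10 hcube, pow_eq_pow_mod 14 hcube, pow_eq_pow_mod 16 hcube,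
    pow_eq_pow_mod 20 hcube, pow_eq_pow_mod 28 hcube, pow_eq_pow_mod 32 hcube,
    Nat.reduceMod, pow_one]
  rw [show 51 * n = 3 * (17 * n) by omega, ← factor_mul_factor_sq_mul_factor_one hω,
    ← factor_mul_factor_sq_mul_factor_one hω]
  refine Ring.mul_inverse_eq_mul_inverse_of_mul_eq ?_ ?_ (by ring) <;>
    simp [IsUnit.mul_iff, isUnit_factor, hn]
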